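/- arXiv:2501.07896 — 2 statements merged into one kernel-verified Lean document; each statement's English description precedes it below -/
import Mathlib

section
/- Correctness of the HS-lb termination condition: if K is a set of cores, h is a minimum-cost vector hitting K, and h is a solution vector, then the cost of h equals w*, the optimal feasible assignment cost. -/
theorem hs_lb_termination_general {A : Type*} (C : Set A) (m : ℕ) (f : Fin m → A → ℕ)
    (astar : A) (hastar : astar ∈ C)
    (hopt : ∀ a ∈ C, ∑ i, f i astar ≤ ∑ i, f i a)
    (K : Set (Fin m → ℕ))
    (hK : ∀ k ∈ K, ¬ ∃ a ∈ C, ∀ i, f i a ≤ k i)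
    (h : Fin m → ℕ)
    (hmin : ∀ h' : Fin m → ℕ, (∀ k ∈ K, ¬ h' ≤ k) → ∑ i, h i ≤ ∑ i, h' i)
    (hsol : ∃ a ∈ C, ∀ i, f i a ≤ h i) :
    ∑ i, h i = ∑ i, f i astar := by
  have hastar_hits : ∀ k ∈ K, ¬ (fun i => f i astar) ≤ k :=
    fun k hk hle => hK k hk ⟨astar, hastar, hle⟩
  obtain ⟨a, haC, hfa⟩ := hsol
  refine le_antisymm (hmin _ hastar_hits) ?_
  calc ∑ i, f i astar ≤ ∑ i, f i a := hopt a haC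
    _ ≤ ∑ i, h i := Finset.sum_le_sum fun i _ => hfa i

/-- Correctness of HS-lb termination: a minimum-cost hitting vector of a set of cores
which is itself a solution vector has cost exactly `w*`. -/
theorem hs_lb_termination {A : Type*} (C : Set A) (m : ℕ) (f : Fin m → A → ℕ)
    (astar : A) (hastar : astar ∈ C)
    (hopt : ∀ a ∈ C, ∑ i, f i astar ≤ ∑ i, f i a)
    (K : Set (Fin m → ℕ))
    (hK : ∀ k ∈ K, ¬ ∃ a ∈ C, ∀ i, f i a ≤ k i)
    (h : Fin m → ℕ)
    (hhits : ∀ k ∈ K, ¬ h ≤ k)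
    (hmin : ∀ h' : Fin m → ℕ, (∀ k ∈ K, ¬ h' ≤ k) → ∑ i, h i ≤ ∑ i, h' i)
    (hsol : ∃ a ∈ C, ∀ i, f i a ≤ h i) :
    ∑ i, h i = ∑ i, f i astar :=
  hs_lb_termination_general C m f astar hastar hopt K hK h hmin hsol
end

section
/- Correctness of the HS-ub termination condition: if K is a set of cores, ub is the cost of some solution vector, and every vector hitting K has cost ≥ ub, then ub = w*. -/
/-! The cost vector of an optimal assignment is a solution vector, so it lies above no core:
it hits `K` and hence costs at least `ub`. Conversely `ub` is the cost of a vector dominating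
the cost vector of a feasible assignment, so it is at least the optimum. -/

theorem not_le_of_forall_not_solution {A : Type*} {C : Set A} {m : ℕ} {f : Fin m → A → ℕ}
    {a : A} (ha : a ∈ C) {k : Fin m → ℕ} (hk : ¬ ∃ a ∈ C, ∀ i, f i a ≤ k i) :
    ¬ (fun i => f i a) ≤ k :=
  fun hle => hk ⟨a, ha, hle⟩

theorem sum_le_sum_of_solution {A : Type*} {C : Set A} {m : ℕ} {f : Fin m → A → ℕ} {astar : A}
    (hopt : ∀ a ∈ C, ∑ i, f i astar ≤ ∑ i, f i a) {v : Fin m → ℕ}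
    (hv : ∃ a ∈ C, ∀ i, f i a ≤ v i) :
    ∑ i, f i astar ≤ ∑ i, v i := by
  obtain ⟨a, ha, hle⟩ := hv
  exact (hopt a ha).trans (Finset.sum_le_sum fun i _ => hle i)

/-- Correctness of HS-ub termination: if `ub` is the cost of a solution vector and every
vector hitting the core set `K` has cost at least `ub`, then `ub = w*`. -/
theorem hs_ub_termination {A : Type*} (C : Set A) (m : ℕ) (f : Fin m → A → ℕ)
    (astar : A) (hastar : astar ∈ C)
    (hopt : ∀ a ∈ C, ∑ i, f i astar ≤ ∑ i, f i a)
    (K : Set (Fin m → ℕ))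
    (hK : ∀ k ∈ K, ¬ ∃ a ∈ C, ∀ i, f i a ≤ k i)
    (ub : ℕ) (v : Fin m → ℕ)
    (hv : ∃ a ∈ C, ∀ i, f i a ≤ v i) (hvcost : ∑ i, v i = ub)
    (hnohit : ∀ h : Fin m → ℕ, (∀ k ∈ K, ¬ h ≤ k) → ub ≤ ∑ i, h i) :
    ub = ∑ i, f i astar :=
  le_antisymm
    (hnohit _ fun k hk => not_le_of_forall_not_solution hastar (hK k hk))
    (hvcost ▸ sum_le_sum_of_solution hopt hv)
end
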